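/- arXiv:math/9910178 — 2 statements merged into one kernel-verified Lean document; each statement's English description precedes it below -/
import Mathlib

section
/- In the inductive step of extending an A-infinity action: suppose coderivations b_1,…,b_{N-1} of degree 1 on X = T(A[1]) ⊗ L satisfy Σ_{i+j=n+1} b_i b_j = 0 for all n ≤ N-1 (N ≥ 4). Then the map c = b_2 b_{N-1} + b_3 b_{N-2} + … + b_{N-1} b_2 vanishes on the subcomodule X_{N-1} (tensor length < N-1 part), takes X_N into L, and the induced graded map of degree 2 from X_N/X_{N-1} = A[1]^{⊗(N-1)} ⊗ L to L is a morphism of complexes, i.e. commutes with the differentials induced by b_1. -/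
open scoped TensorProduct

noncomputable section

/-- Transport along an equality of indices. -/
def cstM {k : Type} [CommRing k] {M : ℤ → Type} [∀ i, AddCommGroup (M i)]
    [∀ i, Module k (M i)] {i j : ℤ} (h : i = j) : M i →ₗ[k] M j := by
  subst h; exact LinearMap.id

variable (k A : Type) [CommRing k] [Ring A] [Algebra k A]

/-- The `n`-fold tensor power of `A` over `k`, i.e. the tensor-length `n` component
`A[1]^{⊗ n}` (of degree `-n`) of the tensor coalgebra `C = T(A[1])`. -/
abbrev TPow (n : ℕ) : Type := ⨂[k] (_ : Fin n), A

/-- The tuple obtained by multiplying the entries at positions `t`, `t+1`. -/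
def mergeV {A : Type} [Ring A] {n : ℕ} (x : Fin (n + 1) → A) (t : ℕ) (ht : t < n) :
    Fin n → A :=
  fun s => if (s : ℕ) < t then x ⟨s, by have := s.2; omega⟩
    else if (s : ℕ) = t then x ⟨t, by omega⟩ * x ⟨t + 1, by omega⟩
    else x ⟨(s : ℕ) + 1, by have := s.2; omega⟩

/-- Deconcatenation `A^{⊗(p+r)} → A^{⊗p} ⊗ A^{⊗r}`, one component of the
comultiplication of `C = T(A[1])`. -/
def splitC (p r : ℕ) : TPow k A (p + r) →ₗ[k] TPow k A p ⊗[k] TPow k A r :=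
  (PiTensorProduct.tmulEquiv k A).symm.toLinearMap ∘ₗ
    (PiTensorProduct.reindex k (fun _ : Fin (p + r) => A) finSumFinEquiv.symm).toLinearMap

variable (L : ℤ → Type) [∀ j, AddCommGroup (L j)] [∀ j, Module k (L j)]

/-- The `(n, j)` component `A[1]^{⊗ n} ⊗ L^j` (of degree `j - n`) of the cofree
comodule `X = C ⊗ L = T(A[1]) ⊗ L`. -/
abbrev XC (n : ℕ) (j : ℤ) : Type := TPow k A n ⊗[k] L j

/-- Transport along an equality of `L`-degrees. -/
def cstT {n : ℕ} {j j' : ℤ} (h : j = j') : XC k A L n j →ₗ[k] XC k A L n j' := by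
  subst h; exact LinearMap.id

/-- The `(p, r)`-component `X_{p+r} → C_p ⊗ X_r` of the comultiplication
`δ : X → C ⊗ X` of the cofree comodule `X = C ⊗ L`. -/
def splitX (p r : ℕ) (j : ℤ) :
    XC k A L (p + r) j →ₗ[k] TPow k A p ⊗[k] XC k A L r j :=
  (TensorProduct.assoc k (TPow k A p) (TPow k A r) (L j)).toLinearMap ∘ₗ
    LinearMap.rTensor (L j) (splitC k A p r)

/-- A coderivation of degree `e` of the cofree comodule `X = C ⊗ L`, described by its
matrix of components `cp n m j : C_n ⊗ L^j → C_m ⊗ L^{j + e + m - n}` (a graded map of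
degree `e` lowers tensor length, never raises it: `bounded`).  The field `law` is the
componentwise form, on pure tensors, of the coderivation identity
`δ ∘ b = (b_C ⊗ 1_X + 1_C ⊗ b) ∘ δ`, where `b_C` is the bar differential of `C`
(of degree `1`, so the `b_C ⊗ 1_X`-term contributes to the component `(p, r)` exactly
when `e = 1` and the tail has length `r + 1`) and where the Koszul sign rule produces
the sign `(-1)^{e·p}` in the `1_C ⊗ b`-term. -/
structure Coder (e : ℤ) where
  cp : ∀ (n m : ℕ) (j : ℤ), XC k A L n j →ₗ[k] XC k A L m (j + e + (m : ℤ) - (n : ℤ))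
  bounded : ∀ n m j, n < m → cp n m j = 0
  law : ∀ (p s r : ℕ) (j : ℤ) (u : Fin p → A) (v : Fin s → A) (l : L j),
    splitX k A L p r _
        (cp (p + s) (p + r) j (PiTensorProduct.tprod k (Fin.append u v) ⊗ₜ[k] l)) =
      ((if h : e = 1 ∧ s = r + 1 then
        ∑ t ∈ Finset.range p, (if ht : t < p then
          ((-1 : ℤ) ^ t) •
            (LinearMap.lTensor (TPow k A p) (cstT k A L (by omega))
              (PiTensorProduct.tprod k
                  (mergeV (Fin.snoc u (v ⟨0, by omega⟩)) t ht) ⊗ₜ[k]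
                (PiTensorProduct.tprod k
                    (fun q : Fin r => v ⟨(q : ℕ) + 1, by have := q.2; omega⟩) ⊗ₜ[k] l)))
        else 0 : TPow k A p ⊗[k] XC k A L r (j + e + ((p + r : ℕ) : ℤ) - ((p + s : ℕ) : ℤ)))
      else 0)
      + ((-1 : ℤ) ^ ((e * (p : ℤ)).natAbs)) •
          (PiTensorProduct.tprod k u ⊗ₜ[k]
            cstT k A L (by push_cast; omega)
              (cp s r j (PiTensorProduct.tprod k v ⊗ₜ[k] l)))
        : TPow k A p ⊗[k] XC k A L r (j + e + ((p + r : ℕ) : ℤ) - ((p + s : ℕ) : ℤ)))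

/-- The contraction `C_0 ⊗ L^j ≅ k ⊗ L^j ≅ L^j`. -/
def contract0 (j : ℤ) : XC k A L 0 j →ₗ[k] L j :=
  (TensorProduct.lid k (L j)).toLinearMap ∘ₗ
    LinearMap.rTensor (L j) (PiTensorProduct.isEmptyEquiv (Fin 0)).toLinearMap

/-- The components of `ε ∘ b : X → L`, for `ε : X → L` the canonical projection. -/
def epsC {e : ℤ} (b : Coder k A L e) (n : ℕ) (j : ℤ) :
    XC k A L n j →ₗ[k] L (j + e - (n : ℤ)) :=
  cstM (k := k) (by ring) ∘ₗ (contract0 k A L _ ∘ₗ b.cp n 0 j)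

/-- The components of the composite `b ∘ b'` of two degree `1` coderivations. -/
def compC (b b' : Coder k A L 1) (n p : ℕ) (j : ℤ) :
    XC k A L n j →ₗ[k] XC k A L p (j + 2 + (p : ℤ) - (n : ℤ)) :=
  ∑ m ∈ Finset.range (n + 1),
    (cstT k A L (by ring) ∘ₗ (b.cp m p _ ∘ₗ b'.cp n m j))

/-!
Each `b_i` is determined by the bar differential and by `ε ∘ b_i`, which lives in tensor
length `i - 1`; so `b_i` lowers tensor length by `1` or by `i - 1`, and its drop-one part is
that of `b_1` unless `i = 2`. On a component of `c` lowering length by `D < N - 1`, only the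
pairs `b_D b_{N+1-D}` and `b_{N+1-D} b_D` with one factor acting through its drop-one part
survive; replacing that factor by `b_1`, they add up to the component of
`∑_{i+j=D+1} b_i b_j = 0` (for `D = 2` the other pairs survive too, but act as `b_1 b_1 = 0`).
For the chain map property, the relations in degrees `i` and `N + 1 - i`, composed with
`b_{N+1-i}` and `b_i`, show that `b_1 c` and `c b_1` both equal minus the sum of `b_x b_y b_z`
over `x + y + z = N + 2` with `x, z ≥ 2`; the remaining term of `c b_1`, through the bar part
of `b_1`, starts in `X_{N-1}`, where `c` vanishes.
-/

open Finset

theorem LinearMap.comp_finset_sum {R M₁ M₂ M₃ ι : Type*} [CommSemiring R] [AddCommMonoid M₁]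
    [AddCommMonoid M₂] [AddCommMonoid M₃] [Module R M₁] [Module R M₂] [Module R M₃]
    (f : M₂ →ₗ[R] M₃) (s : Finset ι) (g : ι → M₁ →ₗ[R] M₂) :
    f ∘ₗ (∑ i ∈ s, g i) = ∑ i ∈ s, f ∘ₗ g i :=
  map_sum (LinearMap.compRight R f) g s

theorem LinearMap.finset_sum_comp {R M₁ M₂ M₃ ι : Type*} [CommSemiring R] [AddCommMonoid M₁]
    [AddCommMonoid M₂] [AddCommMonoid M₃] [Module R M₁] [Module R M₂] [Module R M₃]
    (s : Finset ι) (g : ι → M₂ →ₗ[R] M₃) (f : M₁ →ₗ[R] M₂) :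
    (∑ i ∈ s, g i) ∘ₗ f = ∑ i ∈ s, g i ∘ₗ f :=
  map_sum (LinearMap.lcomp R M₃ f) g s

section

variable {k A L}

theorem XC.hom_ext {n : ℕ} {j : ℤ} {M : Type} [AddCommGroup M] [Module k M]
    {f g : XC k A L n j →ₗ[k] M}
    (h : ∀ (w : Fin n → A) (l : L j),
      f (PiTensorProduct.tprod k w ⊗ₜ l) = g (PiTensorProduct.tprod k w ⊗ₜ l)) :
    f = g :=
  TensorProduct.ext (PiTensorProduct.ext (MultilinearMap.ext fun w => LinearMap.ext (h w)))

theorem splitX_injective (p r : ℕ) (j : ℤ) : Function.Injective (splitX k A L p r j) := by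
  unfold splitX splitC
  rw [← LinearEquiv.coe_trans, ← LinearEquiv.coe_rTensor, ← LinearEquiv.coe_trans]
  exact LinearEquiv.injective _

theorem contract0_injective (j : ℤ) : Function.Injective (contract0 k A L j) := by
  unfold contract0
  rw [← LinearEquiv.coe_rTensor, ← LinearEquiv.coe_trans]
  exact LinearEquiv.injective _

theorem cstM_eq_zero_iff {M : ℤ → Type} [∀ i, AddCommGroup (M i)] [∀ i, Module k (M i)]
    {i i' : ℤ} (h : i = i') (y : M i) : cstM (k := k) h y = 0 ↔ y = 0 := by
  subst h; rfl

theorem cstT_comp_cstT_comp {M : Type} [AddCommGroup M] [Module k M] {n : ℕ} {j₁ j₂ j₃ : ℤ}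
    (h : j₁ = j₂) (h' : j₂ = j₃) (f : M →ₗ[k] XC k A L n j₁) :
    cstT k A L h' ∘ₗ (cstT k A L h ∘ₗ f) = cstT k A L (h.trans h') ∘ₗ f := by
  subst h h'; rfl

theorem Coder.cp_comp_cstT_comp {e : ℤ} (b : Coder k A L e) {M : Type} [AddCommGroup M]
    [Module k M] {n m : ℕ} {j₁ j₂ : ℤ} (h : j₁ = j₂) (f : M →ₗ[k] XC k A L n j₁) :
    b.cp n m j₂ ∘ₗ (cstT k A L h ∘ₗ f) = cstT k A L (by rw [h]) ∘ₗ (b.cp n m j₁ ∘ₗ f) := by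
  subst h; rfl

/-- `b` is the coderivation extending a component `C_d ⊗ L → L`. -/
def Coder.Extends {e : ℤ} (b : Coder k A L e) (d : ℕ) : Prop :=
  ∀ (n : ℕ) (j : ℤ), n ≠ d → epsC k A L b n j = 0

namespace Coder.Extends

theorem cp_zero_eq_zero {e : ℤ} {b : Coder k A L e} {d : ℕ} (hb : b.Extends d) {n : ℕ}
    (hn : n ≠ d) (j : ℤ) : b.cp n 0 j = 0 := by
  refine LinearMap.ext fun x => ?_
  have hx := LinearMap.congr_fun (hb n j hn) x
  simp only [epsC, LinearMap.comp_apply, LinearMap.zero_apply, cstM_eq_zero_iff] at hx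
  exact contract0_injective _ (hx.trans (map_zero _).symm)

theorem cp_eq_zero {b : Coder k A L 1} {d : ℕ} (hb : b.Extends d) {n m : ℕ} (h₁ : n ≠ m + 1)
    (hd : n ≠ m + d) (j : ℤ) : b.cp n m j = 0 := by
  rcases lt_or_ge n m with h | h
  · exact b.bounded n m j h
  obtain ⟨s, rfl⟩ := Nat.exists_eq_add_of_le h
  refine XC.hom_ext fun w l => ?_
  obtain ⟨u, v, rfl⟩ : ∃ u v, Fin.append u v = w := ⟨_, _, Fin.append_castAdd_natAdd⟩
  have hlaw := b.law m s 0 j u v l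
  rw [dif_neg (by omega), hb.cp_zero_eq_zero (by omega)] at hlaw
  simp only [LinearMap.zero_apply, map_zero, TensorProduct.tmul_zero, zero_add] at hlaw
  exact splitX_injective m 0 _ (hlaw.trans (map_zero _).symm)

theorem cp_succ_eq {b b' : Coder k A L 1} {d d' : ℕ} (hb : b.Extends d) (hb' : b'.Extends d')
    (hd : d ≠ 1) (hd' : d' ≠ 1) (m : ℕ) (j : ℤ) : b.cp (m + 1) m j = b'.cp (m + 1) m j := by
  refine XC.hom_ext fun w l => splitX_injective m 0 _ ?_
  obtain ⟨u, v, rfl⟩ : ∃ u v, Fin.append u v = w := ⟨_, _, Fin.append_castAdd_natAdd⟩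
  have hlaw := b.law m 1 0 j u v l
  have hlaw' := b'.law m 1 0 j u v l
  rw [hb.cp_zero_eq_zero hd.symm] at hlaw
  rw [hb'.cp_zero_eq_zero hd'.symm] at hlaw'
  exact hlaw.trans hlaw'.symm

end Coder.Extends

def compVia (b b' : Coder k A L 1) (n p : ℕ) (j : ℤ) (m : ℕ) :
    XC k A L n j →ₗ[k] XC k A L p (j + 2 + (p : ℤ) - (n : ℤ)) :=
  cstT k A L (by ring) ∘ₗ (b.cp m p _ ∘ₗ b'.cp n m j)

theorem compC_eq_sum_compVia (b b' : Coder k A L 1) (n p : ℕ) (j : ℤ) :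
    compC k A L b b' n p j = ∑ m ∈ range (n + 1), compVia b b' n p j m := rfl

theorem compVia_congr {b b' c c' : Coder k A L 1} {n p m : ℕ} {j : ℤ}
    (h : ∀ j', b.cp m p j' = c.cp m p j') (h' : b'.cp n m j = c'.cp n m j) :
    compVia b b' n p j m = compVia c c' n p j m := by
  rw [compVia, compVia, h, h']

section

variable {b b' : Coder k A L 1} {d d' : ℕ}

theorem compVia_eq_zero (hb : b.Extends d) (hb' : b'.Extends d') {n p m : ℕ} (j : ℤ)
    (h : (m ≠ p + 1 ∧ m ≠ p + d) ∨ (n ≠ m + 1 ∧ n ≠ m + d')) : compVia b b' n p j m = 0 := by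
  rcases h with ⟨h₁, hd⟩ | ⟨h₁, hd⟩
  · simp [compVia, hb.cp_eq_zero h₁ hd]
  · simp [compVia, hb'.cp_eq_zero h₁ hd]

theorem compC_eq_zero (hb : b.Extends d) (hb' : b'.Extends d') {n p : ℕ} (j : ℤ)
    (h : ∀ m ≤ n, (m ≠ p + 1 ∧ m ≠ p + d) ∨ (n ≠ m + 1 ∧ n ≠ m + d')) :
    compC k A L b b' n p j = 0 :=
  sum_eq_zero fun m hm => compVia_eq_zero hb hb' j (h m (Nat.lt_succ_iff.mp (mem_range.mp hm)))

theorem compC_eq_compVia (hb : b.Extends d) (hb' : b'.Extends d') {n p : ℕ} (j : ℤ) (m₀ : ℕ)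
    (hm₀ : m₀ ≤ n) (h : ∀ m ≤ n, m ≠ m₀ → (m ≠ p + 1 ∧ m ≠ p + d) ∨ (n ≠ m + 1 ∧ n ≠ m + d')) :
    compC k A L b b' n p j = compVia b b' n p j m₀ :=
  sum_eq_single_of_mem m₀ (mem_range.mpr (Nat.lt_succ_iff.mpr hm₀)) fun m hm hne =>
    compVia_eq_zero hb hb' j (h m (Nat.lt_succ_iff.mp (mem_range.mp hm)) hne)

end

/-- The components of `∑_{i + i' = n + 1} b_i b_{i'}`. -/
def relC (bs : ℕ → Coder k A L 1) (n src tgt : ℕ) (j : ℤ) :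
    XC k A L src j →ₗ[k] XC k A L tgt (j + 2 + (tgt : ℤ) - (src : ℤ)) :=
  ∑ i ∈ Icc 1 n, compC k A L (bs i) (bs (n + 1 - i)) src tgt j

/-- The components of `c = b_2 b_{N-1} + b_3 b_{N-2} + ⋯ + b_{N-1} b_2`. -/
def defectC (bs : ℕ → Coder k A L 1) (N src tgt : ℕ) (j : ℤ) :
    XC k A L src j →ₗ[k] XC k A L tgt (j + 2 + (tgt : ℤ) - (src : ℤ)) :=
  ∑ i ∈ Icc 2 (N - 1), compC k A L (bs i) (bs (N + 1 - i)) src tgt j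

section

variable {N : ℕ} {bs : ℕ → Coder k A L 1}

-- The drop-one part of `b_i` is the bar differential, plus for `i = 2` the extension of `ε ∘ b_2`.
theorem cp_succ_eq_of_ne_two (hext : ∀ i, 1 ≤ i → i ≤ N - 1 → (bs i).Extends (i - 1))
    (i : ℕ) (hi : 1 ≤ i) (hiN : i ≤ N - 1) (hi₂ : i ≠ 2) (m : ℕ) (j : ℤ) :
    (bs i).cp (m + 1) m j = (bs 1).cp (m + 1) m j :=
  (hext i hi hiN).cp_succ_eq (hext 1 le_rfl (by omega)) (by omega) (by omega) m j

theorem defectC_drop_two (hN : 4 ≤ N) (hext : ∀ i, 1 ≤ i → i ≤ N - 1 → (bs i).Extends (i - 1))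
    {t : ℕ} {j : ℤ} (h₁ : relC bs 1 (t + 2) t j = 0) (h₂ : relC bs 2 (t + 2) t j = 0) :
    defectC bs N (t + 2) t j = 0 := by
  have hvia : ∀ x y, 1 ≤ x → x ≤ N - 1 → 1 ≤ y → y ≤ N - 1 → x + y ≠ 4 ∨ x = 2 →
      compC k A L (bs x) (bs y) (t + 2) t j = compVia (bs x) (bs y) (t + 2) t j (t + 1) :=
    fun x y hx hxN hy hyN hxy =>
      compC_eq_compVia (hext x hx hxN) (hext y hy hyN) j _ (by omega) fun m _ _ => by omega
  have h₁₁ : compVia (bs 1) (bs 1) (t + 2) t j (t + 1) = 0 := by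
    rw [← hvia 1 1 le_rfl (by omega) le_rfl (by omega) (by omega)]
    rwa [relC, Icc_self, sum_singleton] at h₁
  have h₁₂ : compVia (bs 1) (bs 2) (t + 2) t j (t + 1)
      + compVia (bs 2) (bs 1) (t + 2) t j (t + 1) = 0 := by
    rw [← hvia 1 2 le_rfl (by omega) (by omega) (by omega) (by omega),
      ← hvia 2 1 (by omega) (by omega) le_rfl (by omega) (by omega)]
    rwa [relC, show Icc 1 2 = {1, 2} by decide, sum_pair (by omega)] at h₂
  rw [defectC, sum_eq_add_of_mem 2 (N - 1) (by simp; omega) (by simp; omega) (by omega)]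
  · rw [hvia 2 _ (by omega) (by omega) (by omega) (by omega) (by omega),
      hvia (N - 1) _ (by omega) (by omega) (by omega) (by omega) (by omega),
      show N + 1 - (N - 1) = 2 by omega,
      compVia_congr (fun _ => rfl)
        (cp_succ_eq_of_ne_two hext (N + 1 - 2) (by omega) (by omega) (by omega) (t + 1) j),
      compVia_congr (cp_succ_eq_of_ne_two hext (N - 1) (by omega) (by omega) (by omega) t) rfl]
    exact (add_comm _ _).trans h₁₂
  · intro i hi hne
    rw [mem_Icc] at hi
    rw [hvia i _ (by omega) (by omega) (by omega) (by omega) (by omega),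
      compVia_congr (cp_succ_eq_of_ne_two hext i (by omega) (by omega) (by omega) t)
        (cp_succ_eq_of_ne_two hext (N + 1 - i) (by omega) (by omega) (by omega) (t + 1) j)]
    exact h₁₁

theorem sum_compC_eq_sum_compVia {ι : Type*} (s : Finset ι) (f g : ι → Coder k A L 1)
    (n p : ℕ) (j : ℤ) :
    ∑ i ∈ s, compC k A L (f i) (g i) n p j
      = ∑ x ∈ s ×ˢ range (n + 1), compVia (f x.1) (g x.1) n p j x.2 := by
  simp only [compC_eq_sum_compVia, sum_product]

theorem defectC_drop_ge_three (hext : ∀ i, 1 ≤ i → i ≤ N - 1 → (bs i).Extends (i - 1))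
    {D t : ℕ} {j : ℤ} (hD : 3 ≤ D) (hDN : D + 2 ≤ N) (hrel : relC bs D (t + D) t j = 0) :
    defectC bs N (t + D) t j = 0 := by
  have hrel' : relC bs D (t + D) t j = compVia (bs 1) (bs D) (t + D) t j (t + 1)
      + compVia (bs D) (bs 1) (t + D) t j (t + D - 1) := by
    rw [relC, sum_compC_eq_sum_compVia,
      sum_eq_add_of_mem (1, t + 1) (D, t + D - 1) (by simp; omega) (by simp; omega)
        (by simp; omega)]
    · simp only [add_tsub_cancel_right, add_tsub_cancel_left]
    · rintro ⟨a, m⟩ hx hne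
      simp only [mem_product, mem_Icc, mem_range, ne_eq, Prod.mk.injEq] at hx hne
      exact compVia_eq_zero (hext a (by omega) (by omega)) (hext (D + 1 - a) (by omega) (by omega))
        j (by omega)
  rw [defectC, sum_compC_eq_sum_compVia,
    sum_eq_add_of_mem (D, t + D - 1) (N + 1 - D, t + 1) (by simp; omega) (by simp; omega)
      (by simp; omega)]
  · have e₁ : (bs (N + 1 - D)).cp (t + D) (t + D - 1) j = (bs 1).cp (t + D) (t + D - 1) j := by
      have h := cp_succ_eq_of_ne_two hext (N + 1 - D) (by omega) (by omega) (by omega)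
        (t + D - 1) j
      rwa [Nat.sub_add_cancel (by omega : 1 ≤ t + D)] at h
    have e₂ : ∀ j', (bs (N + 1 - D)).cp (t + 1) t j' = (bs 1).cp (t + 1) t j' :=
      cp_succ_eq_of_ne_two hext (N + 1 - D) (by omega) (by omega) (by omega) t
    rw [show N + 1 - (N + 1 - D) = D by omega, compVia_congr (fun _ => rfl) e₁,
      compVia_congr e₂ rfl]
    exact (add_comm _ _).trans (hrel'.symm.trans hrel)
  · rintro ⟨i, m⟩ hx hne
    simp only [mem_product, mem_Icc, mem_range, ne_eq, Prod.mk.injEq] at hx hne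
    exact compVia_eq_zero (hext i (by omega) (by omega)) (hext (N + 1 - i) (by omega) (by omega))
      j (by omega)

theorem defectC_eq_zero_of_lt (hN : 4 ≤ N)
    (hext : ∀ i, 1 ≤ i → i ≤ N - 1 → (bs i).Extends (i - 1))
    (hrel : ∀ n, 1 ≤ n → n ≤ N - 1 → ∀ src tgt j, relC bs n src tgt j = 0)
    {src tgt : ℕ} (h : src < tgt + (N - 1)) (j : ℤ) : defectC bs N src tgt j = 0 := by
  rcases lt_or_ge src (tgt + 2) with h₂ | h₂
  · refine sum_eq_zero fun i hi => ?_
    rw [mem_Icc] at hi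
    exact compC_eq_zero (hext i (by omega) (by omega)) (hext (N + 1 - i) (by omega) (by omega)) j
      fun m _ => by omega
  obtain ⟨D, rfl⟩ : ∃ D, src = tgt + D := ⟨src - tgt, by omega⟩
  obtain rfl | hD := eq_or_lt_of_le (show 2 ≤ D by omega)
  · exact defectC_drop_two hN hext (hrel 1 le_rfl (by omega) _ _ _)
      (hrel 2 (by omega) (by omega) _ _ _)
  · exact defectC_drop_ge_three hext hD (by omega) (hrel D (by omega) (by omega) _ _ _)

end

def comp3 (b₁ b₂ b₃ : Coder k A L 1) (n p : ℕ) (j : ℤ) :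
    XC k A L n j →ₗ[k] XC k A L p (j + 3 + (p : ℤ) - (n : ℤ)) :=
  ∑ m ∈ range (n + 1), cstT k A L (by ring) ∘ₗ (b₁.cp m p _ ∘ₗ compC k A L b₂ b₃ n m j)

theorem comp3_eq_sum_compC_comp (b₁ b₂ b₃ : Coder k A L 1) (n p : ℕ) (j : ℤ) :
    comp3 b₁ b₂ b₃ n p j
      = ∑ m ∈ range (n + 1), cstT k A L (j' := j + 3 + (p : ℤ) - (n : ℤ)) (by ring) ∘ₗ
          (compC k A L b₁ b₂ m p _ ∘ₗ b₃.cp n m j) := by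
  simp only [comp3, compC, LinearMap.comp_finset_sum, LinearMap.finset_sum_comp,
    LinearMap.comp_assoc, Coder.cp_comp_cstT_comp, cstT_comp_cstT_comp]
  rw [sum_comm]
  refine sum_congr rfl fun m₂ hm₂ => (sum_subset ?_ fun m₁ _ hm₁ => ?_).symm
  · exact range_subset_range.mpr (by simpa using hm₂)
  · rw [b₂.bounded m₂ m₁ _ (by simpa using hm₁)]
    simp

theorem sum_comp3_eq_zero_left {ι : Type*} (s : Finset ι) (f g : ι → Coder k A L 1)
    (b : Coder k A L 1) {n p : ℕ} (j : ℤ)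
    (h : ∀ m j', ∑ a ∈ s, compC k A L (f a) (g a) m p j' = 0) :
    ∑ a ∈ s, comp3 (f a) (g a) b n p j = 0 := by
  simp only [comp3_eq_sum_compC_comp]
  rw [sum_comm]
  refine sum_eq_zero fun m _ => ?_
  rw [← LinearMap.comp_finset_sum, ← LinearMap.finset_sum_comp, h]
  simp

theorem sum_comp3_eq_zero_right {ι : Type*} (s : Finset ι) (b : Coder k A L 1)
    (f g : ι → Coder k A L 1) {n p : ℕ} (j : ℤ)
    (h : ∀ m, ∑ a ∈ s, compC k A L (f a) (g a) n m j = 0) :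
    ∑ a ∈ s, comp3 b (f a) (g a) n p j = 0 := by
  simp only [comp3]
  rw [sum_comm]
  refine sum_eq_zero fun m _ => ?_
  rw [← LinearMap.comp_finset_sum, ← LinearMap.comp_finset_sum, h]
  simp

theorem comp3_eq_cp_zero_comp {b₁ : Coder k A L 1} (hb₁ : b₁.Extends 0) (b₂ b₃ : Coder k A L 1)
    (n : ℕ) (j : ℤ) :
    comp3 b₁ b₂ b₃ n 0 j = cstT k A L (by ring) ∘ₗ (b₁.cp 0 0 _ ∘ₗ compC k A L b₂ b₃ n 0 j) :=
  sum_eq_single_of_mem 0 (by simp) fun m _ hm => by simp [hb₁.cp_zero_eq_zero hm]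

-- Both sides run over the `(x, y, z)` with `x + y + z = N + 2`, `x, z ≥ 2`, `y ≥ 1`.
theorem sum_sum_Ioc_eq_sum_sum_Ico {M : Type*} [AddCommMonoid M] (N : ℕ) (f : ℕ → ℕ → ℕ → M) :
    ∑ i ∈ Icc 2 (N - 1), ∑ a ∈ Ioc 1 i, f a (i + 1 - a) (N + 1 - i)
      = ∑ i ∈ Icc 2 (N - 1), ∑ a ∈ Ico 1 (N + 1 - i), f i a (N + 1 - i + 1 - a) := by
  rw [sum_sigma', sum_sigma']
  refine sum_nbij' (fun x => ⟨x.2, x.1 + 1 - x.2⟩) (fun x => ⟨x.1 + x.2 - 1, x.1⟩)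
    ?_ ?_ ?_ ?_ ?_ <;> rintro ⟨i, a⟩ h <;> simp only [mem_sigma, mem_Icc, mem_Ioc, mem_Ico] at h <;>
    obtain ⟨⟨_, _⟩, _, _⟩ := h
  · simp only [mem_sigma, mem_Icc, mem_Ico]; omega
  · simp only [mem_sigma, mem_Icc, mem_Ioc]; omega
  · simp only [Sigma.mk.injEq, heq_eq_eq, and_true]; omega
  · simp only [Sigma.mk.injEq, heq_eq_eq, true_and]; omega
  · dsimp only; congr 1; omega

theorem defectC_comp_cp_comm {N : ℕ} {bs : ℕ → Coder k A L 1} (h₁ : (bs 1).Extends 0)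
    (hrel : ∀ n, 1 ≤ n → n ≤ N - 1 → ∀ src tgt j, relC bs n src tgt j = 0)
    (hvan : ∀ j, defectC bs N (N - 2) 0 j = 0) (j : ℤ) :
    cstT k A L (j' := j + 3 - ((N - 1 : ℕ) : ℤ)) (by push_cast; ring) ∘ₗ
        ((bs 1).cp 0 0 _ ∘ₗ defectC bs N (N - 1) 0 j)
      = cstT k A L (by push_cast; ring) ∘ₗ
          (defectC bs N (N - 1) 0 _ ∘ₗ (bs 1).cp (N - 1) (N - 1) j) := by
  have hL : ∀ i ∈ Icc 2 (N - 1),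
      ∑ a ∈ Icc 1 i, comp3 (bs a) (bs (i + 1 - a)) (bs (N + 1 - i)) (N - 1) 0 j = 0 :=
    fun i hi => sum_comp3_eq_zero_left _ _ _ _ j fun m j' =>
      hrel i (by simp at hi; omega) (by simp at hi; omega) m 0 j'
  have hR : ∀ i ∈ Icc 2 (N - 1),
      ∑ a ∈ Icc 1 (N + 1 - i), comp3 (bs i) (bs a) (bs (N + 1 - i + 1 - a)) (N - 1) 0 j = 0 :=
    fun i hi => sum_comp3_eq_zero_right _ _ _ _ j fun m =>
      hrel (N + 1 - i) (by simp at hi; omega) (by simp at hi; omega) (N - 1) m j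
  have hcomm : ∑ i ∈ Icc 2 (N - 1), comp3 (bs 1) (bs i) (bs (N + 1 - i)) (N - 1) 0 j
      = ∑ i ∈ Icc 2 (N - 1), comp3 (bs i) (bs (N + 1 - i)) (bs 1) (N - 1) 0 j := by
    have eL : ∑ i ∈ Icc 2 (N - 1), (comp3 (bs 1) (bs i) (bs (N + 1 - i)) (N - 1) 0 j
        + ∑ a ∈ Ioc 1 i, comp3 (bs a) (bs (i + 1 - a)) (bs (N + 1 - i)) (N - 1) 0 j) = 0 :=
      sum_eq_zero fun i hi => by
        rw [← hL i hi, ← add_sum_Ioc_eq_sum_Icc (by simp at hi; omega), Nat.add_sub_cancel]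
    have eR : ∑ i ∈ Icc 2 (N - 1),
        (∑ a ∈ Ico 1 (N + 1 - i), comp3 (bs i) (bs a) (bs (N + 1 - i + 1 - a)) (N - 1) 0 j
          + comp3 (bs i) (bs (N + 1 - i)) (bs 1) (N - 1) 0 j) = 0 :=
      sum_eq_zero fun i hi => by
        rw [← hR i hi, ← sum_Ico_add_eq_sum_Icc (by simp at hi; omega), Nat.add_sub_cancel_left]
    rw [sum_add_distrib,
      sum_sum_Ioc_eq_sum_sum_Ico N fun x y z => comp3 (bs x) (bs y) (bs z) (N - 1) 0 j] at eL
    rw [sum_add_distrib] at eR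
    exact (eq_neg_of_add_eq_zero_left eL).trans (neg_eq_of_add_eq_zero_right eR)
  calc _ = cstT k A L (j' := j + 3 - ((N - 1 : ℕ) : ℤ)) (by push_cast; ring) ∘ₗ
          ∑ i ∈ Icc 2 (N - 1), comp3 (bs 1) (bs i) (bs (N + 1 - i)) (N - 1) 0 j := by
        simp only [comp3_eq_cp_zero_comp h₁, defectC, LinearMap.comp_finset_sum,
          cstT_comp_cstT_comp]
    _ = cstT k A L (by push_cast; ring) ∘ₗ
          ∑ i ∈ Icc 2 (N - 1), comp3 (bs i) (bs (N + 1 - i)) (bs 1) (N - 1) 0 j := by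
        rw [hcomm]
    _ = _ := by
        simp only [defectC] at hvan ⊢
        simp only [comp3_eq_sum_compC_comp, LinearMap.comp_finset_sum, cstT_comp_cstT_comp]
        rw [sum_comm, sum_eq_single_of_mem (N - 1) (by simp)]
        · simp only [LinearMap.finset_sum_comp, LinearMap.comp_finset_sum]
        · intro m _ hm
          rcases eq_or_ne m (N - 2) with rfl | hm'
          · rw [← LinearMap.comp_finset_sum, ← LinearMap.finset_sum_comp, hvan]
            simp
          · simp [h₁.cp_eq_zero (n := N - 1) (m := m) (by omega) (by omega)]

end

/-- the inductive step in the extension of an `A`-infinity action.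
Given degree `1` coderivations `b_1, …, b_{N-1}` of `X = T(A[1]) ⊗ L` (each `b_i`
extending a component `A[1]^{⊗(i-1)} ⊗ L → L`, i.e. `ε ∘ b_i` is concentrated in
tensor length `i - 1`), with `∑_{i+j=n+1} b_i b_j = 0` for all `n ≤ N - 1`
(`N ≥ 4`), the map `c = b_2 b_{N-1} + b_3 b_{N-2} + ⋯ + b_{N-1} b_2`
vanishes on the subcomodule `X_{N-1}` (tensor lengths `≤ N - 2`), maps `X_N` into `L`
(its component with source length `N - 1` lands in tensor length `0`), and the induced
degree `2` map `X_N / X_{N-1} = A[1]^{⊗(N-1)} ⊗ L → L` is a morphism of complexes,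
i.e. commutes with the differentials induced by `b_1`. -/
theorem inductive_step_defect_chain_map
    (k A : Type) [CommRing k] [Ring A] [Algebra k A]
    (L : ℤ → Type) [∀ j, AddCommGroup (L j)] [∀ j, Module k (L j)]
    (N : ℕ) (hN : 4 ≤ N)
    (bs : ℕ → Coder k A L 1)
    (hconc : ∀ i : ℕ, 1 ≤ i → i ≤ N - 1 → ∀ (n : ℕ) (j : ℤ), n ≠ i - 1 →
      epsC k A L (bs i) n j = 0)
    (hrel : ∀ n' : ℕ, 1 ≤ n' → n' ≤ N - 1 → ∀ (src tgt : ℕ) (j : ℤ),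
      (∑ i ∈ Finset.Icc 1 n',
        compC k A L (bs i) (bs (n' + 1 - i)) src tgt j) = 0) :
    (∀ (src tgt : ℕ) (j : ℤ), src ≤ N - 2 →
      (∑ i ∈ Finset.Icc 2 (N - 1),
        compC k A L (bs i) (bs (N + 1 - i)) src tgt j) = 0)
    ∧ (∀ tgt : ℕ, 1 ≤ tgt → ∀ j : ℤ,
      (∑ i ∈ Finset.Icc 2 (N - 1),
        compC k A L (bs i) (bs (N + 1 - i)) (N - 1) tgt j) = 0)
    ∧ (∀ j : ℤ,
      (cstT k A L (by push_cast; ring) ∘ₗ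
          ((bs 1).cp 0 0 _ ∘ₗ
            (∑ i ∈ Finset.Icc 2 (N - 1),
              compC k A L (bs i) (bs (N + 1 - i)) (N - 1) 0 j))
        : XC k A L (N - 1) j →ₗ[k] XC k A L 0 (j + 3 - ((N - 1 : ℕ) : ℤ)))
      = cstT k A L (by push_cast; ring) ∘ₗ
          ((∑ i ∈ Finset.Icc 2 (N - 1),
              compC k A L (bs i) (bs (N + 1 - i)) (N - 1) 0 _) ∘ₗ
            (bs 1).cp (N - 1) (N - 1) j)) := by
  have hvan : ∀ {src tgt : ℕ}, src < tgt + (N - 1) → ∀ j, defectC bs N src tgt j = 0 :=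
    fun h j => defectC_eq_zero_of_lt hN hconc hrel h j
  exact ⟨fun src tgt j hsrc => hvan (by omega) j, fun tgt htgt j => hvan (by omega) j,
    defectC_comp_cp_comm (hconc 1 le_rfl (by omega)) hrel (hvan (by omega))⟩
end
end

section
/- Let D be a double complex concentrated in the right half plane (columns indexed by p ≥ 0) such that every column is acyclic. Then the product total complex Tot^Π D is acyclic. -/
noncomputable section

/-- Transport along equalities of both indices of a doubly graded module. -/
def cst2 {k : Type} [CommRing k] {M : ℕ → ℤ → Type} [∀ p q, AddCommGroup (M p q)]
    [∀ p q, Module k (M p q)] {p p' : ℕ} {q q' : ℤ} (h : p = p') (h' : q = q') :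
    M p q →ₗ[k] M p' q' := by
  subst h; subst h'; exact LinearMap.id

/-- The degree `n` component of the product total complex of a double complex
concentrated in the right half plane (columns `p ≥ 0`, rows `q ∈ ℤ`). -/
abbrev TotPi (k : Type) [CommRing k] (M : ℕ → ℤ → Type) [∀ p q, AddCommGroup (M p q)]
    [∀ p q, Module k (M p q)] (n : ℤ) : Type := ∀ p : ℕ, M p (n - (p : ℤ))


/-!
A cycle `x` of `Tot^Π D` in degree `n` is hit by a "staircase" `y`, built column by column:
solve `dv y₀ = x₀` in column `0`; once `y₀, …, y_p` are found, `x_{p+1} - dh y_p` is a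
`dv`-cycle (by `dv x_{p+1} = -dh x_p`, anticommutativity and `dh ∘ dh = 0`), so acyclicity of
column `p + 1` yields `y_{p+1}`. Since `Tot^Π` is a product, the infinite staircase is an
element of it.
-/

section Staircase

variable {A B C : ℕ → Type*} [∀ p, AddCommGroup (A p)] [∀ p, AddCommGroup (B p)]
  [∀ p, AddCommGroup (C p)]
  {s : ∀ p, A p → B p} {v : ∀ p, B p →+ A p} {h : ∀ p, B p →+ A (p + 1)}
  {v' : ∀ p, A p →+ C p} {h' : ∀ p, A p →+ C (p + 1)} {x : ∀ p, A p}

variable (s h x) in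
def staircase : ∀ p, B p
  | 0 => s 0 (x 0)
  | p + 1 => s (p + 1) (x (p + 1) - h p (staircase p))

section

variable (hs : ∀ p a, v' p a = 0 → v p (s p a) = a)
include hs

theorem map_staircase_zero (hx₀ : v' 0 (x 0) = 0) : v 0 (staircase s h x 0) = x 0 :=
  hs 0 _ hx₀

theorem map_staircase_succ (hanti : ∀ p b, h' p (v p b) = - v' (p + 1) (h p b))
    (hx : ∀ p, v' (p + 1) (x (p + 1)) + h' p (x p) = 0) {p : ℕ}
    (hp : h' p (v p (staircase s h x p)) = h' p (x p)) :
    v (p + 1) (staircase s h x (p + 1)) = x (p + 1) - h p (staircase s h x p) := by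
  refine hs (p + 1) _ ?_
  rw [map_sub, sub_eq_add_neg, ← hanti, hp, hx]

theorem map_map_staircase (hh : ∀ p b, h' (p + 1) (h p b) = 0)
    (hanti : ∀ p b, h' p (v p b) = - v' (p + 1) (h p b))
    (hx₀ : v' 0 (x 0) = 0) (hx : ∀ p, v' (p + 1) (x (p + 1)) + h' p (x p) = 0) :
    ∀ p, h' p (v p (staircase s h x p)) = h' p (x p)
  | 0 => by rw [map_staircase_zero hs hx₀]
  | p + 1 => by
    rw [map_staircase_succ hs hanti hx (map_map_staircase hh hanti hx₀ hx p), map_sub, hh, sub_zero]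

end

theorem exists_staircase_preimage (hexact : ∀ p a, v' p a = 0 → ∃ b, v p b = a)
    (hh : ∀ p b, h' (p + 1) (h p b) = 0) (hanti : ∀ p b, h' p (v p b) = - v' (p + 1) (h p b))
    (hx₀ : v' 0 (x 0) = 0) (hx : ∀ p, v' (p + 1) (x (p + 1)) + h' p (x p) = 0) :
    ∃ y : ∀ p, B p, v 0 (y 0) = x 0 ∧ ∀ p, v (p + 1) (y (p + 1)) + h p (y p) = x (p + 1) := by
  choose! s hs using hexact
  refine ⟨staircase s h x, map_staircase_zero hs hx₀, fun p => ?_⟩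
  rw [map_staircase_succ hs hanti hx (map_map_staircase hs hh hanti hx₀ hx p), sub_add_cancel]

end Staircase

section Slices

variable {k : Type} [CommRing k] {M : ℕ → ℤ → Type} [∀ p q, AddCommGroup (M p q)]
  [∀ p q, Module k (M p q)]
  (dv : ∀ (p : ℕ) (q : ℤ), M p q →ₗ[k] M p (q + 1))
  (dh : ∀ (p : ℕ) (q : ℤ), M p q →ₗ[k] M (p + 1) q)

theorem cstM_apply {n m : ℤ} (e : n = m) (a : TotPi k M n) (p : ℕ) :
    cstM (k := k) (M := TotPi k M) e a p = cst2 (k := k) rfl (by rw [e]) (a p) := by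
  subst e; rfl

/-- `dv` followed by a transport of the row index, so that its source and target can be taken
to be the components `M p (n - p)` of `Tot^Π` in neighbouring degrees. -/
def vert (p : ℕ) {q q' : ℤ} (e : q + 1 = q') : M p q →+ M p q' :=
  (cst2 (k := k) rfl e ∘ₗ dv p q).toAddMonoidHom

def horiz (p : ℕ) {q q' : ℤ} (e : q = q') : M p q →+ M (p + 1) q' :=
  (cst2 (k := k) rfl e ∘ₗ dh p q).toAddMonoidHom

theorem cst2_vert {p : ℕ} {q q' q'' : ℤ} (e : q + 1 = q') (e' : q' = q'') (a : M p q) :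
    cst2 (k := k) rfl e' (vert dv p e a) = vert dv p (e.trans e') a := by
  subst e'; rfl

theorem cst2_horiz {p : ℕ} {q q' q'' : ℤ} (e : q = q') (e' : q' = q'') (a : M p q) :
    cst2 (k := k) rfl e' (horiz dh p e a) = horiz dh p (e.trans e') a := by
  subst e'; rfl

theorem vert_cst2 {p : ℕ} {q q' q'' : ℤ} (e : q = q') (e' : q' + 1 = q'') (a : M p q) :
    vert dv p e' (cst2 (k := k) rfl e a) = vert dv p (e ▸ e') a := by
  subst e; rfl

theorem horiz_horiz (hdh2 : ∀ p q (x : M p q), dh (p + 1) q (dh p q x) = 0) {p : ℕ}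
    {q q' q'' : ℤ} (e : q = q') (e' : q' = q'') (a : M p q) :
    horiz dh (p + 1) e' (horiz dh p e a) = 0 := by
  subst e e'; exact hdh2 p q a

theorem horiz_vert
    (hanti : ∀ p q (x : M p q), dh p (q + 1) (dv p q x) = - dv (p + 1) q (dh p q x))
    {p : ℕ} {q q₁ q₂ q₃ : ℤ} (e₁ : q + 1 = q₁) (e₂ : q₁ = q₃) (e₃ : q = q₂) (e₄ : q₂ + 1 = q₃)
    (b : M p q) :
    horiz dh p e₂ (vert dv p e₁ b) = - vert dv (p + 1) e₄ (horiz dh p e₃ b) := by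
  subst e₁ e₂ e₃; exact hanti p q b

theorem exists_vert_eq_of_vert_eq_zero (hcol : ∀ (p : ℕ) (q : ℤ) (x : M p q), dv p q x = 0 →
      ∃ y : M p (q - 1),
        cst2 (k := k) rfl (sub_add_cancel q 1 : q - 1 + 1 = q) (dv p (q - 1) y) = x)
    {p : ℕ} {q q₁ q₂ : ℤ} (e : q + 1 = q₁) (e₁ : q₁ + 1 = q₂) (a : M p q₁)
    (ha : vert dv p e₁ a = 0) : ∃ b, vert dv p e b = a := by
  subst e e₁
  obtain ⟨y, hy⟩ := hcol p (q + 1) a ha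
  exact ⟨cst2 (k := k) rfl (by ring) y, by rw [vert_cst2]; exact hy⟩

variable {dv dh} {D : ∀ n : ℤ, TotPi k M n →ₗ[k] TotPi k M (n + 1)}
  (hD : ∀ (n : ℤ) (x : TotPi k M n) (p : ℕ),
    D n x p = cst2 (k := k) rfl
        (sub_add_eq_add_sub n (p : ℤ) 1 : n - (p : ℤ) + 1 = n + 1 - (p : ℤ))
        (dv p (n - (p : ℤ)) (x p))
      + (if h : 1 ≤ p then
          cst2 (k := k) (Nat.sub_add_cancel h) (by omega)
            (dh (p - 1) (n - ((p - 1 : ℕ) : ℤ)) (x (p - 1)))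
        else 0))
include hD

theorem totDiff_apply_zero (n : ℤ) (x : TotPi k M n) : D n x 0 = vert dv 0 (by ring) (x 0) := by
  rw [hD, dif_neg (by omega), add_zero]; rfl

theorem totDiff_apply_succ (n : ℤ) (x : TotPi k M n) (p : ℕ) :
    D n x (p + 1) =
      vert dv (p + 1) (by ring) (x (p + 1)) + horiz dh p (by push_cast; ring) (x p) := by
  rw [hD, dif_pos (by omega)]; rfl

end Slices

/-- let `D = (M, dv, dh)` be a double complex (of `k`-modules) in the
right half plane (columns indexed by `p ≥ 0`), with anticommuting differentials,
such that every column is acyclic.  Then the product total complex `Tot^Π D`, with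
differential `(D x)_p = dv(x_p) + dh(x_{p-1})`, is acyclic. -/
theorem product_total_complex_acyclic
    (k : Type) [CommRing k]
    (M : ℕ → ℤ → Type) [∀ p q, AddCommGroup (M p q)] [∀ p q, Module k (M p q)]
    (dv : ∀ (p : ℕ) (q : ℤ), M p q →ₗ[k] M p (q + 1))
    (dh : ∀ (p : ℕ) (q : ℤ), M p q →ₗ[k] M (p + 1) q)
    (hdh2 : ∀ p q (x : M p q), dh (p + 1) q (dh p q x) = 0)
    (hanti : ∀ p q (x : M p q), dh p (q + 1) (dv p q x) = - dv (p + 1) q (dh p q x))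
    -- every column is acyclic:
    (hcol : ∀ (p : ℕ) (q : ℤ) (x : M p q), dv p q x = 0 →
      ∃ y : M p (q - 1), cst2 (k := k) rfl (by ring) (dv p (q - 1) y) = x)
    -- the differential of the product total complex:
    (D : ∀ n : ℤ, TotPi k M n →ₗ[k] TotPi k M (n + 1))
    (hD : ∀ (n : ℤ) (x : TotPi k M n) (p : ℕ),
      D n x p = cst2 (k := k) rfl (by ring) (dv p (n - (p : ℤ)) (x p))
        + (if h : 1 ≤ p then
            cst2 (k := k) (by omega) (by push_cast; omega)
              (dh (p - 1) (n - ((p - 1 : ℕ) : ℤ)) (x (p - 1)))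
          else 0)) :
    ∀ (n : ℤ) (x : TotPi k M n), D n x = 0 →
      ∃ y : TotPi k M (n - 1), cstM (k := k) (by ring) (D (n - 1) y) = x := by
  intro n x hx
  obtain ⟨y, hy₀, hy⟩ := exists_staircase_preimage (x := x)
    (C := fun p => M p (n + 1 - p)) (B := fun p => M p (n - 1 - p))
    (v := fun p => vert dv p (by ring)) (h := fun p => horiz dh p (by push_cast; ring))
    (v' := fun p => vert dv p (by ring)) (h' := fun p => horiz dh p (by push_cast; ring))
    (fun _ => exists_vert_eq_of_vert_eq_zero dv hcol _ _) (fun _ => horiz_horiz dh hdh2 _ _)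
    (fun _ => horiz_vert dv dh hanti _ _ _ _)
    (by rw [← totDiff_apply_zero hD, hx]; rfl) (fun p => by rw [← totDiff_apply_succ hD, hx]; rfl)
  refine ⟨y, funext fun p => ?_⟩
  rcases p with _ | p
  · rw [cstM_apply, totDiff_apply_zero hD, cst2_vert]; exact hy₀
  · rw [cstM_apply, totDiff_apply_succ hD, map_add, cst2_vert, cst2_horiz]; exact hy p
end
end
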